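/- arXiv:1608.05002 — 5 statements merged into one kernel-verified Lean document; each statement's English description precedes it below -/
import Mathlib

section
/- Let $S_n$ be a binomial random variable with parameters $n$ and $p \in [0,1]$. For all real $c$ with $1 < c < 2$ and all $d > 0$, the probability that $S_n/n \geq cp + d/n$ is at most $e^{(1-c)d}$. -/
/-!
Exponential Markov inequality: for `t ≥ 0`, `P(S_n ≥ a) ≤ e^{-ta} E[e^{t S_n}]`, and
`E[e^{t S_n}] = (1 + p (e^t - 1))^n ≤ e^{n p (e^t - 1)}`. With `t = c - 1 ∈ (0, 1)` and
`a = n c p + d`, the bound `e^t - 1 ≤ t (1 + t) = t c` makes the `p`-terms of the exponent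
non-positive, leaving `-t d = (1 - c) d`.
-/

open Real MeasureTheory ProbabilityTheory NNReal

set_option linter.deprecated false

theorem Real.exp_sub_one_le_mul_one_add {t : ℝ} (ht : |t| ≤ 1) : exp t - 1 ≤ t * (1 + t) := by
  have := (abs_le.mp (abs_exp_sub_one_sub_id_le ht)).2
  linarith

namespace PMF

variable {p : ℝ≥0} (hp : p ≤ 1) (n : ℕ)

theorem mgf_binomial (t : ℝ) :
    mgf (fun k : Fin (n + 1) => ((k : ℕ) : ℝ)) (binomial p hp n).toMeasure t
      = (p * exp t + (1 - p)) ^ n := by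
  rw [mgf, integral_eq_sum, add_pow, ← Fin.sum_univ_eq_sum_range]
  refine Finset.sum_congr rfl fun k _ => ?_
  rw [binomial_apply, Fin.val_last, smul_eq_mul, mul_pow, ← exp_nat_mul, mul_comm t]
  simp only [ENNReal.toReal_mul, ENNReal.toReal_pow, ENNReal.toReal_natCast, ENNReal.coe_toReal,
    ENNReal.toReal_sub_of_le (ENNReal.coe_le_one_iff.mpr hp) ENNReal.one_ne_top, ENNReal.toReal_one]
  ring

theorem mgf_binomial_le_exp (t : ℝ) :
    mgf (fun k : Fin (n + 1) => ((k : ℕ) : ℝ)) (binomial p hp n).toMeasure t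
      ≤ exp (n * (p * (exp t - 1))) := by
  have hp' : (p : ℝ) ≤ 1 := hp
  rw [mgf_binomial, exp_nat_mul]
  refine pow_le_pow_left₀ (by nlinarith [exp_pos t, p.coe_nonneg]) ?_ n
  linarith [add_one_le_exp (p * (exp t - 1))]

theorem binomial_measureReal_ge_le_exp {t : ℝ} (ht : 0 ≤ t) (a : ℝ) :
    (binomial p hp n).toMeasure.real {k | a ≤ ((k : ℕ) : ℝ)}
      ≤ exp (n * p * (exp t - 1) - t * a) :=
  calc _ ≤ exp (-t * a) * mgf (fun k : Fin (n + 1) => ((k : ℕ) : ℝ)) (binomial p hp n).toMeasure t :=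
        measure_ge_le_exp_mul_mgf a ht .of_finite
    _ ≤ exp (-t * a) * exp (n * (p * (exp t - 1))) := by gcongr; exact mgf_binomial_le_exp hp n t
    _ = exp (n * p * (exp t - 1) - t * a) := by rw [← exp_add]; ring_nf

end PMF

theorem binomial_upper_tail_chernoff_general
    (n : ℕ) (hn : 0 < n) (p : ℝ) (hp0 : 0 ≤ p) (hp1 : p ≤ 1)
    (c d : ℝ) (hc1 : 1 < c) (hc2 : c < 2) :
    (PMF.binomial (Real.toNNReal p) (Real.toNNReal_le_one.mpr hp1) n).toMeasure
      {k : Fin (n + 1) | c * p + d / n ≤ ((k : ℕ) : ℝ) / n}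
      ≤ ENNReal.ofReal (Real.exp ((1 - c) * d)) := by
  have hn' : (0 : ℝ) < n := by exact_mod_cast hn
  have hset : {k : Fin (n + 1) | c * p + d / n ≤ ((k : ℕ) : ℝ) / n}
      = {k : Fin (n + 1) | n * c * p + d ≤ ((k : ℕ) : ℝ)} := by
    ext k
    rw [Set.mem_ofPred_eq, Set.mem_ofPred_eq, le_div_iff₀ hn', add_mul,
      div_mul_cancel₀ _ hn'.ne']
    ring_nf
  have hexp : exp (c - 1) - 1 ≤ (c - 1) * c := by
    simpa using Real.exp_sub_one_le_mul_one_add (t := c - 1) (abs_le.mpr ⟨by linarith, by linarith⟩)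
  rw [hset, ← ofReal_measureReal]
  refine ENNReal.ofReal_le_ofReal
    ((PMF.binomial_measureReal_ge_le_exp _ n (t := c - 1) (by linarith) _).trans ?_)
  rw [Real.coe_toNNReal _ hp0, exp_le_exp]
  nlinarith [mul_nonneg hn'.le hp0]

/-- Chernoff-type upper tail bound for a binomial random variable `S_n` with
parameters `n ≥ 1` and `p ∈ [0,1]`: for `1 < c < 2` and `d > 0`,
`P(S_n / n ≥ c p + d / n) ≤ exp ((1 - c) d)`. -/
theorem binomial_upper_tail_chernoff
    (n : ℕ) (hn : 0 < n) (p : ℝ) (hp0 : 0 ≤ p) (hp1 : p ≤ 1)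
    (c d : ℝ) (hc1 : 1 < c) (hc2 : c < 2) (hd : 0 < d) :
    (PMF.binomial (Real.toNNReal p) (Real.toNNReal_le_one.mpr hp1) n).toMeasure
      {k : Fin (n + 1) | c * p + d / n ≤ ((k : ℕ) : ℝ) / n}
      ≤ ENNReal.ofReal (Real.exp ((1 - c) * d)) :=
  binomial_upper_tail_chernoff_general n hn p hp0 hp1 c d hc1 hc2
end

section
/- Let $S_n$ be a binomial random variable with parameters $n$ and $p \in [0,1]$. For all real $c$ with $1 < c < 2$ and all $d > 0$, the probability that $S_n/n \leq p/c - d/n$ is at most $e^{(1-c)d}$. -/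
open MeasureTheory
open Finset Real

-- the real-valued core inequality
lemma chernoff_real (n : ℕ) (hn : 0 < n) (p : ℝ) (hp0 : 0 ≤ p) (hp1 : p ≤ 1)
    (c d : ℝ) (hc1 : 1 < c) (hd : 0 < d) :
    ∑ k ∈ Finset.range (n + 1),
      (if ((k : ℝ)) / n ≤ p / c - d / n then
        (n.choose k : ℝ) * (p ^ k * (1 - p) ^ (n - k)) else 0)
      ≤ Real.exp ((1 - c) * d) := by
  have hc0 : (0:ℝ) < c := by linarith
  have hn0 : (0:ℝ) < n := by exact_mod_cast hn
  obtain ⟨t, ht⟩ : ∃ t : ℝ, t = c - 1 := ⟨_, rfl⟩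
  obtain ⟨a, ha⟩ : ∃ a : ℝ, a = n * p / c - d := ⟨_, rfl⟩
  have hq0 : (0:ℝ) ≤ 1 - p := by linarith
  have step1 : ∀ k ∈ Finset.range (n+1),
      (if ((k : ℝ)) / n ≤ p / c - d / n then
        (n.choose k : ℝ) * (p ^ k * (1 - p) ^ (n - k)) else 0)
      ≤ Real.exp (t * a) * ((n.choose k : ℝ) * ((p * Real.exp (-t)) ^ k * (1 - p) ^ (n - k))) := by
    intro k _
    have hterm : (0:ℝ) ≤ (n.choose k : ℝ) * (p ^ k * (1 - p) ^ (n - k)) :=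
      mul_nonneg (Nat.cast_nonneg _) (mul_nonneg (pow_nonneg hp0 _) (pow_nonneg hq0 _))
    have hrw : Real.exp (t * a) * ((n.choose k : ℝ) * ((p * Real.exp (-t)) ^ k * (1 - p) ^ (n - k)))
        = Real.exp (t * (a - k)) * ((n.choose k : ℝ) * (p ^ k * (1 - p) ^ (n - k))) := by
      rw [mul_pow, ← Real.exp_nat_mul]
      rw [show t * (a - (k:ℝ)) = t * a + (k:ℝ) * (-t) by ring, Real.exp_add]
      ring
    rw [hrw]
    split_ifs with h
    · have hka : (k : ℝ) ≤ a := by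
        have h' := (div_le_iff₀ hn0).mp h
        have heq : (p / c - d / (n:ℝ)) * n = (n:ℝ) * p / c - d := by field_simp
        rw [ha]
        linarith [h', heq]
      have h1 : (1:ℝ) ≤ Real.exp (t * (a - k)) := by
        rw [Real.one_le_exp_iff]
        have : 0 ≤ t := by rw [ht]; linarith
        nlinarith
      nlinarith
    · positivity
  have step2 : ∑ k ∈ Finset.range (n+1),
      Real.exp (t * a) * ((n.choose k : ℝ) * ((p * Real.exp (-t)) ^ k * (1 - p) ^ (n - k)))
      = Real.exp (t * a) * (p * Real.exp (-t) + (1 - p)) ^ n := by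
    rw [← Finset.mul_sum, add_pow]
    congr 1
    apply Finset.sum_congr rfl
    intro k _
    ring
  have hbase0 : (0:ℝ) ≤ p * Real.exp (-t) + (1 - p) :=
    add_nonneg (mul_nonneg hp0 (Real.exp_nonneg _)) hq0
  have hbase : p * Real.exp (-t) + (1 - p) ≤ Real.exp (-(p * (1 - Real.exp (-t)))) := by
    have := Real.add_one_le_exp (-(p * (1 - Real.exp (-t))))
    linarith
  have step3 : (p * Real.exp (-t) + (1 - p)) ^ n ≤ Real.exp (-(n * (p * (1 - Real.exp (-t))))) := by
    calc (p * Real.exp (-t) + (1 - p)) ^ n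
        ≤ Real.exp (-(p * (1 - Real.exp (-t)))) ^ n := pow_le_pow_left₀ hbase0 hbase n
      _ = Real.exp (-(n * (p * (1 - Real.exp (-t))))) := by
          rw [← Real.exp_nat_mul]; ring_nf
  have step4 : Real.exp (t * a) * Real.exp (-(n * (p * (1 - Real.exp (-t)))))
      ≤ Real.exp ((1 - c) * d) := by
    rw [← Real.exp_add, Real.exp_le_exp]
    have hec : Real.exp (-t) ≤ 1 / c := by
      have h1 : c ≤ Real.exp t := by
        have := Real.add_one_le_exp t; simp [ht] at this ⊢; linarith
      rw [Real.exp_neg, inv_eq_one_div]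
      exact one_div_le_one_div_of_le hc0 h1
    have hnp : (0:ℝ) ≤ (n:ℝ) * p := mul_nonneg hn0.le hp0
    have key : t * a - n * (p * (1 - Real.exp (-t))) - (1 - c) * d
        = (n * p) * (Real.exp (-t) - 1 / c) := by
      rw [ha, ht]
      field_simp
      ring
    have hle : (n:ℝ) * p * (Real.exp (-t) - 1 / c) ≤ 0 :=
      mul_nonpos_of_nonneg_of_nonpos hnp (by linarith)
    linarith [key, hle]
  calc ∑ k ∈ Finset.range (n+1), (if ((k : ℝ)) / n ≤ p / c - d / n then
        (n.choose k : ℝ) * (p ^ k * (1 - p) ^ (n - k)) else 0)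
      ≤ ∑ k ∈ Finset.range (n+1),
        Real.exp (t * a) * ((n.choose k : ℝ) * ((p * Real.exp (-t)) ^ k * (1 - p) ^ (n - k))) :=
        Finset.sum_le_sum step1
    _ = Real.exp (t * a) * (p * Real.exp (-t) + (1 - p)) ^ n := step2
    _ ≤ Real.exp (t * a) * Real.exp (-(n * (p * (1 - Real.exp (-t))))) :=
        mul_le_mul_of_nonneg_left step3 (Real.exp_nonneg _)
    _ ≤ Real.exp ((1 - c) * d) := step4

/-- Chernoff-type lower tail bound for a binomial random variable `S_n` with
parameters `n ≥ 1` and `p ∈ [0,1]`: for `1 < c < 2` and `d > 0`,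
`P(S_n / n ≤ p / c - d / n) ≤ exp ((1 - c) d)`. -/
theorem binomial_lower_tail_chernoff
    (n : ℕ) (hn : 0 < n) (p : ℝ) (hp0 : 0 ≤ p) (hp1 : p ≤ 1)
    (c d : ℝ) (hc1 : 1 < c) (hc2 : c < 2) (hd : 0 < d) :
    (PMF.binomial (Real.toNNReal p) (Real.toNNReal_le_one.mpr hp1) n).toMeasure
      {k : Fin (n + 1) | ((k : ℕ) : ℝ) / n ≤ p / c - d / n}
      ≤ ENNReal.ofReal (Real.exp ((1 - c) * d)) := by
  classical
  set S : Set (Fin (n+1)) := {k : Fin (n + 1) | ((k : ℕ) : ℝ) / n ≤ p / c - d / n} with hS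
  rw [PMF.toMeasure_apply_fintype]
  have hpmf : ∀ k : Fin (n+1),
      (PMF.binomial (Real.toNNReal p) (Real.toNNReal_le_one.mpr hp1) n) k
        = ENNReal.ofReal ((n.choose k : ℝ) * (p ^ (k:ℕ) * (1 - p) ^ (n - (k:ℕ)))) := by
    intro k
    rw [PMF.binomial_apply]
    rw [show ((Real.toNNReal p : NNReal) : ENNReal) = ENNReal.ofReal p from rfl]
    simp only [Fin.val_last]
    rw [← ENNReal.ofReal_one, ← ENNReal.ofReal_sub _ hp0,
      ← ENNReal.ofReal_pow hp0, ← ENNReal.ofReal_pow (by linarith),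
      ← ENNReal.ofReal_mul (pow_nonneg hp0 _),
      show ((n.choose (k:ℕ) : ℕ) : ENNReal) = ENNReal.ofReal (n.choose (k:ℕ) : ℝ) by
        rw [ENNReal.ofReal_natCast],
      ← ENNReal.ofReal_mul (mul_nonneg (pow_nonneg hp0 _) (pow_nonneg (by linarith) _))]
    congr 1
    ring
  have hind : ∀ k : Fin (n+1), S.indicator
      (PMF.binomial (Real.toNNReal p) (Real.toNNReal_le_one.mpr hp1) n) k
      = ENNReal.ofReal (if ((k:ℕ):ℝ) / n ≤ p / c - d / n then
          (n.choose k : ℝ) * (p ^ (k:ℕ) * (1 - p) ^ (n - (k:ℕ))) else 0) := by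
    intro k
    by_cases hk : k ∈ S
    · have hk' : ((k:ℕ):ℝ) / n ≤ p / c - d / n := hk
      rw [Set.indicator_of_mem hk, hpmf, if_pos hk']
    · have hk' : ¬ ((k:ℕ):ℝ) / n ≤ p / c - d / n := hk
      rw [Set.indicator_of_notMem hk, if_neg hk', ENNReal.ofReal_zero]
  calc ∑ k : Fin (n+1), S.indicator _ k
      = ∑ k : Fin (n+1), ENNReal.ofReal (if ((k:ℕ):ℝ) / n ≤ p / c - d / n then
          (n.choose k : ℝ) * (p ^ (k:ℕ) * (1 - p) ^ (n - (k:ℕ))) else 0) := by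
        exact Finset.sum_congr rfl fun k _ => hind k
    _ = ENNReal.ofReal (∑ k : Fin (n+1), (if ((k:ℕ):ℝ) / n ≤ p / c - d / n then
          (n.choose k : ℝ) * (p ^ (k:ℕ) * (1 - p) ^ (n - (k:ℕ))) else 0)) := by
        rw [ENNReal.ofReal_sum_of_nonneg]
        intro k _
        split_ifs
        · exact mul_nonneg (Nat.cast_nonneg _)
            (mul_nonneg (pow_nonneg hp0 _) (pow_nonneg (by linarith) _))
        · exact le_refl 0
    _ ≤ ENNReal.ofReal (Real.exp ((1 - c) * d)) := by
        apply ENNReal.ofReal_le_ofReal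
        rw [Fin.sum_univ_eq_sum_range (fun k => if ((k:ℕ):ℝ) / n ≤ p / c - d / n then
          (n.choose k : ℝ) * (p ^ k * (1 - p) ^ (n - k)) else 0)]
        exact chernoff_real n hn p hp0 hp1 c d hc1 hd
end

section
/- Let $\pi(p) = e^{-1/p}$ on $(0,1]$. Then for every integer $n \geq 0$ and every $\nu \in \{0,\dots,n\}$: $\left[\int_0^1 p^{\nu+1}(1-p)^{n-\nu}\pi(p)\,dp\right]/\left[\int_0^1 p^{\nu}(1-p)^{n-\nu}\pi(p)\,dp\right] \geq 1/(8\sqrt{\max(1,n)})$. -/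
set_option maxHeartbeats 1000000


open MeasureTheory

/-- For the prior density `π(p) = e^{-1/p}` on `(0,1]`, the posterior mean of `p` after
observing `ν` successes in `n` Bernoulli trials is at least `1/(8 √(max 1 n))`. -/
theorem posterior_mean_lower_bound_exp_prior (n ν : ℕ) (hν : ν ≤ n) :
    (∫ p in Set.Ioo (0 : ℝ) 1, p ^ (ν + 1) * (1 - p) ^ (n - ν) * Real.exp (-(1 / p))) /
      (∫ p in Set.Ioo (0 : ℝ) 1, p ^ ν * (1 - p) ^ (n - ν) * Real.exp (-(1 / p)))
      ≥ 1 / (8 * Real.sqrt (max 1 (n : ℝ))) := by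
  have hmax0 : (0:ℝ) ≤ max 1 (n:ℝ) := le_trans zero_le_one (le_max_left _ _)
  set s : ℝ := Real.sqrt (max 1 (n:ℝ)) with hs_def
  have hs1 : 1 ≤ s := Real.one_le_sqrt.mpr (le_max_left _ _)
  have hs0 : 0 < s := lt_of_lt_of_le one_pos hs1
  have hss : s * s = max 1 (n:ℝ) := Real.mul_self_sqrt hmax0
  set c : ℝ := 1 / (8 * s) with hc_def
  have hc0 : 0 < c := by positivity
  have hc8 : c ≤ 1/8 := by
    rw [hc_def]
    exact one_div_le_one_div_of_le (by norm_num) (by linarith)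
  have h8c : 8 * c = 1 / s := by rw [hc_def]; field_simp
  have h8cn : 8 * c * (n:ℝ) ≤ s := by
    rw [h8c, div_mul_eq_mul_div, one_mul, div_le_iff₀ hs0, hss]
    exact le_max_right _ _
  -- the density
  set F : ℝ → ℝ := fun p => p ^ ν * (1 - p) ^ (n - ν) * Real.exp (-(1 / p)) with hF_def
  have hFnn : ∀ p ∈ Set.Ioo (0:ℝ) 1, 0 ≤ F p := by
    intro p hp
    have h1 : (0:ℝ) ≤ 1 - p := by linarith [hp.2]
    exact mul_nonneg (mul_nonneg (pow_nonneg hp.1.le _) (pow_nonneg h1 _))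
      (Real.exp_nonneg _)
  have hFle1 : ∀ p ∈ Set.Ioo (0:ℝ) 1, F p ≤ 1 := by
    intro p hp
    have h1 : (0:ℝ) ≤ 1 - p := by linarith [hp.2]
    have h2 : p ^ ν ≤ 1 := pow_le_one₀ hp.1.le hp.2.le
    have h3 : (1 - p) ^ (n - ν) ≤ 1 := pow_le_one₀ h1 (by linarith [hp.1])
    have h4 : Real.exp (-(1 / p)) ≤ 1 := Real.exp_le_one_iff.mpr (neg_nonpos.mpr (one_div_nonneg.mpr hp.1.le))
    calc F p ≤ 1 * 1 * 1 := by
          apply mul_le_mul _ h4 (Real.exp_nonneg _) (by norm_num)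
          exact mul_le_mul h2 h3 (by positivity) (by norm_num)
      _ = 1 := by norm_num
  have hFmeas : Measurable F := by
    apply Measurable.mul
    apply Measurable.mul
    · exact (measurable_id.pow_const _)
    · exact ((measurable_const.sub measurable_id).pow_const _)
    · exact (measurable_const.div measurable_id).neg.exp
  -- integrability helper
  have key_int : ∀ g : ℝ → ℝ, Measurable g → (∀ p ∈ Set.Ioo (0:ℝ) 1, |g p| ≤ 2) →
      IntegrableOn g (Set.Ioo (0:ℝ) 1) := by
    intro g hg hb
    apply Measure.integrableOn_of_bounded (M := 2)
    · simp [Real.volume_Ioo]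
    · exact hg.aestronglyMeasurable
    · filter_upwards [ae_restrict_mem measurableSet_Ioo] with p hp
      simpa [Real.norm_eq_abs] using hb p hp
  have hIntF : IntegrableOn F (Set.Ioo (0:ℝ) 1) :=
    key_int F hFmeas fun p hp => by
      rw [abs_of_nonneg (hFnn p hp)]; linarith [hFle1 p hp]
  have hIntPF : IntegrableOn (fun p => p * F p) (Set.Ioo (0:ℝ) 1) :=
    key_int _ (measurable_id.mul hFmeas) fun p hp => by
      rw [abs_of_nonneg (mul_nonneg hp.1.le (hFnn p hp))]
      nlinarith [hFnn p hp, hFle1 p hp, hp.1, hp.2]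
  have hIntH : IntegrableOn (fun p => (p - c) * F p) (Set.Ioo (0:ℝ) 1) :=
    key_int _ ((measurable_id.sub measurable_const).mul hFmeas) fun p hp => by
      have := hFnn p hp; have := hFle1 p hp
      rw [abs_mul]
      have h1 : |p - c| ≤ 2 := by
        rw [abs_le]; constructor <;> nlinarith [hp.1, hp.2]
      have h2 : |F p| ≤ 1 := by rw [abs_of_nonneg ‹0 ≤ F p›]; linarith
      nlinarith [abs_nonneg (p - c), abs_nonneg (F p)]
  -- basic interval facts
  have h2c4c : (2*c) ≤ 4*c := by linarith
  have hIccSub : Set.Icc (2*c) (4*c) ⊆ Set.Ioo c 1 := by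
    intro p hp
    constructor
    · linarith [hp.1]
    · linarith [hp.2]
  have hIooSub : Set.Ioo c 1 ⊆ Set.Ioo (0:ℝ) 1 := by
    intro p hp; exact ⟨lt_trans hc0 hp.1, hp.2⟩
  have hIocSub : Set.Ioc (0:ℝ) c ⊆ Set.Ioo (0:ℝ) 1 := by
    intro p hp; exact ⟨hp.1, lt_of_le_of_lt hp.2 (by linarith)⟩
  -- pointwise lower bound on [2c, 4c]
  have hexp_bound : Real.exp (-(8*c)) ≤ 1 - 4*c := by
    have h1 := Real.add_one_le_exp (8*c)
    have h3 : Real.exp (-(8*c)) * Real.exp (8*c) = 1 := by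
      rw [← Real.exp_add]; simp
    nlinarith [Real.exp_pos (8*c), Real.exp_pos (-(8*c))]
  have hFlow : ∀ p ∈ Set.Icc (2*c) (4*c),
      c ^ ν * Real.exp (-(5*s)) ≤ F p := by
    intro p hp
    have hp0 : 0 < p := lt_of_lt_of_le (by linarith) hp.1
    have h1 : c ^ ν ≤ p ^ ν := pow_le_pow_left₀ hc0.le (by linarith [hp.1]) ν
    have h2 : Real.exp (-s) ≤ (1 - p) ^ (n - ν) := by
      have ha : Real.exp (-(8*c)) ≤ 1 - p := le_trans hexp_bound (by linarith [hp.2])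
      have hb : (Real.exp (-(8*c))) ^ (n - ν) ≤ (1 - p) ^ (n - ν) :=
        pow_le_pow_left₀ (Real.exp_nonneg _) ha _
      refine le_trans ?_ hb
      rw [← Real.exp_nat_mul, Real.exp_le_exp]
      have hcast : ((n - ν : ℕ) : ℝ) ≤ (n : ℝ) := by
        exact_mod_cast Nat.cast_le.mpr (Nat.sub_le n ν)
      have hnn : (0:ℝ) ≤ ((n - ν : ℕ) : ℝ) := Nat.cast_nonneg _
      nlinarith [h8cn, hc0]
    have h3 : Real.exp (-(4*s)) ≤ Real.exp (-(1/p)) := by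
      rw [Real.exp_le_exp, neg_le_neg_iff, div_le_iff₀ hp0]
      have he : (2*c)*(4*s) = 1 := by rw [hc_def]; field_simp; ring
      nlinarith [hp.1, hs0]
    have h1p : (0:ℝ) ≤ 1 - p := by
      have := hp.2; nlinarith [hexp_bound, Real.exp_pos (-(8*c))]
    calc c ^ ν * Real.exp (-(5*s))
        = c ^ ν * (Real.exp (-s) * Real.exp (-(4*s))) := by
          rw [show -(5*s) = -s + -(4*s) by ring, Real.exp_add]
      _ ≤ p ^ ν * ((1 - p) ^ (n - ν) * Real.exp (-(1/p))) := by
          have ha : Real.exp (-s) * Real.exp (-(4*s)) ≤ (1-p)^(n-ν) * Real.exp (-(1/p)) :=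
            mul_le_mul h2 h3 (Real.exp_nonneg _) (pow_nonneg h1p _)
          exact mul_le_mul h1 ha (mul_nonneg (Real.exp_nonneg _) (Real.exp_nonneg _))
            (pow_nonneg hp0.le _)
      _ = F p := by simp only [hF_def]; ring
  -- pointwise upper bound on (0, c]
  have hFhigh : ∀ p ∈ Set.Ioc (0:ℝ) c,
      F p ≤ c ^ ν * Real.exp (-(8*s)) := by
    intro p hp
    have hp1 : p < 1 := lt_of_le_of_lt hp.2 (by linarith)
    have h1 : p ^ ν ≤ c ^ ν := pow_le_pow_left₀ hp.1.le hp.2 ν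
    have h2 : (1 - p) ^ (n - ν) ≤ 1 := pow_le_one₀ (by linarith) (by linarith [hp.1])
    have h3 : Real.exp (-(1/p)) ≤ Real.exp (-(8*s)) := by
      rw [Real.exp_le_exp, neg_le_neg_iff]
      have h8s : 8*s = 1/c := by rw [hc_def]; field_simp
      rw [h8s]
      exact one_div_le_one_div_of_le hp.1 hp.2
    have h1p : (0:ℝ) ≤ 1 - p := by linarith
    calc F p = p ^ ν * (1 - p) ^ (n - ν) * Real.exp (-(1/p)) := by simp only [hF_def]
      _ ≤ c ^ ν * 1 * Real.exp (-(8*s)) := by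
          have ha : p ^ ν * (1 - p) ^ (n - ν) ≤ c ^ ν * 1 :=
            mul_le_mul h1 h2 (pow_nonneg h1p _) (pow_nonneg hc0.le _)
          exact mul_le_mul ha h3 (Real.exp_nonneg _)
            (by rw [mul_one]; exact pow_nonneg hc0.le _)
      _ = c ^ ν * Real.exp (-(8*s)) := by ring
  -- lower bound for integral over Ioc 0 c of (p - c) * F p
  have hH1 : -(c * (c * (c ^ ν * Real.exp (-(8*s))))) ≤
      ∫ p in Set.Ioc (0:ℝ) c, (p - c) * F p := by
    have hmono : ∀ p ∈ Set.Ioc (0:ℝ) c,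
        -(c * (c ^ ν * Real.exp (-(8*s)))) ≤ (p - c) * F p := by
      intro p hp
      have hFp := hFnn p (hIocSub hp)
      have hFb := hFhigh p hp
      nlinarith [hp.1, hp.2]
    calc -(c * (c * (c ^ ν * Real.exp (-(8*s)))))
        = ∫ _ in Set.Ioc (0:ℝ) c, -(c * (c ^ ν * Real.exp (-(8*s)))) := by
          rw [setIntegral_const, measureReal_def, Real.volume_Ioc, smul_eq_mul,
            ENNReal.toReal_ofReal (by linarith : (0:ℝ) ≤ c - 0)]
          ring
      _ ≤ ∫ p in Set.Ioc (0:ℝ) c, (p - c) * F p := by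
          apply setIntegral_mono_on _ _ measurableSet_Ioc hmono
          · exact integrableOn_const (by simp [Real.volume_Ioc])
          · exact hIntH.mono_set hIocSub
  -- lower bound for integral over Ioo c 1 of (p - c) * F p
  have hHnn : ∀ p ∈ Set.Ioo c 1, 0 ≤ (p - c) * F p := by
    intro p hp
    exact mul_nonneg (by linarith [hp.1]) (hFnn p (hIooSub hp))
  have hH2 : 2 * c * (c * (c ^ ν * Real.exp (-(5*s)))) ≤
      ∫ p in Set.Ioo c 1, (p - c) * F p := by
    have step1 : 2 * c * (c * (c ^ ν * Real.exp (-(5*s)))) ≤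
        ∫ p in Set.Icc (2*c) (4*c), (p - c) * F p := by
      have hmono : ∀ p ∈ Set.Icc (2*c) (4*c),
          c * (c ^ ν * Real.exp (-(5*s))) ≤ (p - c) * F p := by
        intro p hp
        have h1 := hFlow p hp
        have h2 : c ≤ p - c := by linarith [hp.1]
        have h3 : 0 ≤ c ^ ν * Real.exp (-(5*s)) := by positivity
        nlinarith
      calc 2 * c * (c * (c ^ ν * Real.exp (-(5*s))))
          = ∫ _ in Set.Icc (2*c) (4*c), c * (c ^ ν * Real.exp (-(5*s))) := by
            rw [setIntegral_const, measureReal_def, Real.volume_Icc, smul_eq_mul,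
              ENNReal.toReal_ofReal (by linarith : (0:ℝ) ≤ 4*c - 2*c)]
            ring
        _ ≤ ∫ p in Set.Icc (2*c) (4*c), (p - c) * F p := by
            apply setIntegral_mono_on _ _ measurableSet_Icc hmono
            · exact integrableOn_const (by simp [Real.volume_Icc])
            · exact (hIntH.mono_set hIooSub).mono_set hIccSub
    refine le_trans step1 ?_
    apply setIntegral_mono_set (hIntH.mono_set hIooSub)
    · filter_upwards [ae_restrict_mem measurableSet_Ioo] with p hp using hHnn p hp
    · exact HasSubset.Subset.eventuallyLE hIccSub
  -- split the integral
  have hsplit : ∫ p in Set.Ioo (0:ℝ) 1, (p - c) * F p =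
      (∫ p in Set.Ioc (0:ℝ) c, (p - c) * F p) + ∫ p in Set.Ioo c 1, (p - c) * F p := by
    rw [← setIntegral_union]
    · rw [Set.Ioc_union_Ioo_eq_Ioo hc0.le (by linarith : c < 1)]
    · rw [Set.disjoint_left]
      intro p hp hp'
      exact absurd hp'.1 (not_lt.mpr hp.2)
    · exact measurableSet_Ioo
    · exact hIntH.mono_set hIocSub
    · exact hIntH.mono_set hIooSub
  have hE85 : Real.exp (-(8*s)) ≤ Real.exp (-(5*s)) := by
    rw [Real.exp_le_exp]; linarith
  have htotal : 0 ≤ ∫ p in Set.Ioo (0:ℝ) 1, (p - c) * F p := by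
    rw [hsplit]
    have hcp : (0:ℝ) ≤ c ^ ν := by positivity
    have h_a : 0 ≤ c * c * c ^ ν * (Real.exp (-(5*s)) - Real.exp (-(8*s))) :=
      mul_nonneg (mul_nonneg (mul_nonneg hc0.le hc0.le) hcp) (sub_nonneg.mpr hE85)
    have h_b : 0 ≤ c * c * c ^ ν * Real.exp (-(5*s)) :=
      mul_nonneg (mul_nonneg (mul_nonneg hc0.le hc0.le) hcp) (Real.exp_nonneg _)
    nlinarith [hH1, hH2]
  -- relate to the two integrals
  have hDpos : 0 < ∫ p in Set.Ioo (0:ℝ) 1, F p := by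
    have step1 : 2 * c * (c ^ ν * Real.exp (-(5*s))) ≤
        ∫ p in Set.Icc (2*c) (4*c), F p := by
      calc 2 * c * (c ^ ν * Real.exp (-(5*s)))
          = ∫ _ in Set.Icc (2*c) (4*c), c ^ ν * Real.exp (-(5*s)) := by
            rw [setIntegral_const, measureReal_def, Real.volume_Icc, smul_eq_mul,
              ENNReal.toReal_ofReal (by linarith : (0:ℝ) ≤ 4*c - 2*c)]
            ring
        _ ≤ ∫ p in Set.Icc (2*c) (4*c), F p := by
            apply setIntegral_mono_on _ _ measurableSet_Icc hFlow
            · exact integrableOn_const (by simp [Real.volume_Icc])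
            · exact hIntF.mono_set (Set.Subset.trans hIccSub hIooSub)
    have step2 : (∫ p in Set.Icc (2*c) (4*c), F p) ≤ ∫ p in Set.Ioo (0:ℝ) 1, F p := by
      apply setIntegral_mono_set hIntF
      · filter_upwards [ae_restrict_mem measurableSet_Ioo] with p hp using hFnn p hp
      · exact HasSubset.Subset.eventuallyLE (Set.Subset.trans hIccSub hIooSub)
    have : 0 < 2 * c * (c ^ ν * Real.exp (-(5*s))) := by positivity
    linarith
  have hsub : (∫ p in Set.Ioo (0:ℝ) 1, (p - c) * F p) =
      (∫ p in Set.Ioo (0:ℝ) 1, p * F p) - c * ∫ p in Set.Ioo (0:ℝ) 1, F p := by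
    have h1 : (∫ p in Set.Ioo (0:ℝ) 1, (p - c) * F p) =
        ∫ p in Set.Ioo (0:ℝ) 1, (p * F p - c * F p) := by
      apply setIntegral_congr_fun measurableSet_Ioo
      intro p _
      ring
    rw [h1, integral_sub hIntPF (hIntF.const_mul c), integral_const_mul]
  have hNum : (∫ p in Set.Ioo (0:ℝ) 1,
      p ^ (ν + 1) * (1 - p) ^ (n - ν) * Real.exp (-(1 / p))) =
      ∫ p in Set.Ioo (0:ℝ) 1, p * F p := by
    apply setIntegral_congr_fun measurableSet_Ioo
    intro p _
    simp only [hF_def]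
    ring
  have hDen : (∫ p in Set.Ioo (0:ℝ) 1,
      p ^ ν * (1 - p) ^ (n - ν) * Real.exp (-(1 / p))) =
      ∫ p in Set.Ioo (0:ℝ) 1, F p := rfl
  rw [hNum, hDen, ge_iff_le, le_div_iff₀ hDpos]
  rw [hsub] at htotal
  linarith
end

section
/- Let $f_n(p) = c_n (1-p)^n e^{-1/p}$ for $p \in (0,1)$, where $c_n$ normalizes $f_n$ to a probability density. Set $a_n = 1/(4\sqrt{\max(1,n)})$. Then $\int_{a_n}^1 f_n(p)\,dp \geq 1/2$, and consequently $\int_0^1 p f_n(p)\,dp \geq 1/(8\sqrt{\max(1,n)})$. -/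
/-!
Since `(1 - p)ⁿ e^{-1/p}` has logarithmic derivative `1/p² - n/(1 - p)`, the weight is increasing
on `(0, b)` as soon as `n b² ≤ 1 - b`, in particular on `(0, 2a)`. Shifting by `a` then gives
`∫₀ᵃ ≤ ∫ₐ²ᵃ ≤ ∫ₐ¹`, so at least half of the mass lies in `(a, 1)`, where `p ≥ a`; hence the mean
is at least `a / 2`.
-/

open MeasureTheory Set

noncomputable def expPriorWeight (n : ℕ) (p : ℝ) : ℝ :=
  (1 - p) ^ n * Real.exp (-(1 / p))

namespace expPriorWeight

variable (n : ℕ) {p q b : ℝ}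

lemma nonneg (hp : p ≤ 1) : 0 ≤ expPriorWeight n p :=
  mul_nonneg (pow_nonneg (by linarith) n) (Real.exp_nonneg _)

lemma pos (hp : p < 1) : 0 < expPriorWeight n p :=
  mul_pos (pow_pos (by linarith) n) (Real.exp_pos _)

lemma le_one (hp0 : 0 ≤ p) (hp1 : p ≤ 1) : expPriorWeight n p ≤ 1 := by
  have hexp : Real.exp (-(1 / p)) ≤ 1 := Real.exp_le_one_iff.2 (by simpa using hp0)
  exact mul_le_one₀ (pow_le_one₀ (by linarith) (by linarith)) (Real.exp_nonneg _) hexp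

lemma integrableOn_Icc : IntegrableOn (expPriorWeight n) (Icc 0 1) := by
  refine Measure.integrableOn_of_bounded (M := 1) measure_Icc_lt_top.ne
    (by unfold expPriorWeight; fun_prop) ?_
  filter_upwards [ae_restrict_mem measurableSet_Icc] with p hp
  rw [Real.norm_of_nonneg (nonneg n hp.2)]
  exact le_one n hp.1 hp.2

/-- Writing `1 - p = (1 - q)(1 + d)`, the gain `(1 + d)ⁿ ≤ e^{nd}` is paid for by
`e^{-1/p} = e^{-1/q} e^{-(1/p - 1/q)}` once `nd ≤ 1/p - 1/q`, i.e. `n p q ≤ 1 - q`. -/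
lemma le_of_le (hp : 0 < p) (hpq : p ≤ q) (hq : q < 1) (hnpq : n * p * q ≤ 1 - q) :
    expPriorWeight n p ≤ expPriorWeight n q := by
  have hq0 : 0 < q := hp.trans_le hpq
  have h1q : 0 < 1 - q := by linarith
  set d := (q - p) / (1 - q) with hd
  have hfactor : 1 - p = (1 - q) * (1 + d) := by rw [hd]; field_simp; ring
  have hpow : (1 + d) ^ n ≤ Real.exp (n * d) := by
    rw [Real.exp_nat_mul]
    exact pow_le_pow_left₀ (by positivity) (by linarith [Real.add_one_le_exp d]) n
  have hnd : n * d ≤ 1 / p - 1 / q := by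
    have : 1 / p - 1 / q = (q - p) / (p * q) := by field_simp
    rw [this, ← mul_div_assoc, div_le_div_iff₀ h1q (by positivity)]
    nlinarith [sub_nonneg.2 hpq]
  calc expPriorWeight n p = (1 - q) ^ n * ((1 + d) ^ n * Real.exp (-(1 / p))) := by
        rw [expPriorWeight, hfactor, mul_pow, mul_assoc]
    _ ≤ (1 - q) ^ n * (Real.exp (n * d) * Real.exp (-(1 / p))) := by gcongr
    _ ≤ (1 - q) ^ n * Real.exp (-(1 / q)) := by
        rw [← Real.exp_add]
        gcongr
        linarith
    _ = expPriorWeight n q := rfl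

lemma monotoneOn_Ioo (hb : b ≤ 1) (hnb : n * b ^ 2 ≤ 1 - b) :
    MonotoneOn (expPriorWeight n) (Ioo 0 b) := by
  intro p hp q hq hpq
  refine le_of_le n hp.1 hpq (by linarith [hq.2]) ?_
  have : n * p * q ≤ n * b ^ 2 := by
    rw [mul_assoc, sq]
    gcongr
    all_goals linarith [hp.1, hp.2, hq.1, hq.2]
  linarith [hq.2]

end expPriorWeight

lemma MeasureTheory.IntegrableOn.intervalIntegrable_of_Icc_subset {f : ℝ → ℝ} {s : Set ℝ}
    {x y : ℝ} (hf : IntegrableOn f s) (hxy : x ≤ y) (hs : Icc x y ⊆ s) :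
    IntervalIntegrable f volume x y :=
  (hf.mono_set (by rwa [uIcc_of_le hxy])).intervalIntegrable

section MonotoneMass

variable {f : ℝ → ℝ} {a : ℝ}

lemma intervalIntegral_le_intervalIntegral_shift_of_monotoneOn (ha : 0 ≤ a)
    (hf : IntegrableOn f (Icc 0 (2 * a))) (hmono : MonotoneOn f (Ioo 0 (2 * a))) :
    ∫ x in 0..a, f x ≤ ∫ x in a..2 * a, f x := by
  have hf₁ : IntervalIntegrable f volume 0 a :=
    hf.intervalIntegrable_of_Icc_subset ha (Icc_subset_Icc le_rfl (by linarith))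
  have hshift : IntervalIntegrable (fun x => f (x + a)) volume 0 a := by
    simpa [two_mul] using
      (hf.intervalIntegrable_of_Icc_subset (by linarith) (Icc_subset_Icc ha le_rfl)).comp_add_right a
  calc ∫ x in 0..a, f x ≤ ∫ x in 0..a, f (x + a) :=
        intervalIntegral.integral_mono_on_of_le_Ioo ha hf₁ hshift fun x hx =>
          hmono ⟨hx.1, by linarith [hx.2]⟩ ⟨by linarith [hx.1], by linarith [hx.2]⟩
            (by linarith)
    _ = ∫ x in a..2 * a, f x := by
        rw [intervalIntegral.integral_comp_add_right, zero_add, two_mul]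

lemma intervalIntegral_le_two_mul_of_monotoneOn (ha : 0 ≤ a) (h2a : 2 * a ≤ 1)
    (hf : IntegrableOn f (Icc 0 1)) (hf0 : ∀ x ∈ Icc 0 1, 0 ≤ f x)
    (hmono : MonotoneOn f (Ioo 0 (2 * a))) :
    ∫ x in 0..1, f x ≤ 2 * ∫ x in a..1, f x := by
  have hsub : ∀ {x y}, 0 ≤ x → x ≤ y → y ≤ 1 → IntervalIntegrable f volume x y :=
    fun hx hxy hy => hf.intervalIntegrable_of_Icc_subset hxy (Icc_subset_Icc hx hy)
  have hlow := intervalIntegral_le_intervalIntegral_shift_of_monotoneOn ha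
    (hf.mono_set (Icc_subset_Icc le_rfl h2a)) hmono
  have hsplit₀ := intervalIntegral.integral_add_adjacent_intervals
    (hsub le_rfl ha (by linarith)) (hsub ha (by linarith) le_rfl)
  have hsplit₁ := intervalIntegral.integral_add_adjacent_intervals
    (hsub ha (by linarith) h2a) (hsub (by linarith) h2a le_rfl)
  have htail : 0 ≤ ∫ x in 2 * a..1, f x :=
    intervalIntegral.integral_nonneg h2a fun x hx => hf0 x ⟨by linarith [hx.1], hx.2⟩
  linarith

lemma mul_intervalIntegral_le_intervalIntegral_mul {b : ℝ} (ha : 0 ≤ a) (hab : a ≤ b)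
    (hf : IntegrableOn f (Icc 0 b)) (hf0 : ∀ x ∈ Icc 0 b, 0 ≤ f x) :
    a * ∫ x in a..b, f x ≤ ∫ x in 0..b, x * f x := by
  have hsub : ∀ {x y}, 0 ≤ x → x ≤ y → y ≤ b → IntervalIntegrable f volume x y :=
    fun hx hxy hy => hf.intervalIntegrable_of_Icc_subset hxy (Icc_subset_Icc hx hy)
  have hmul : ∀ {x y}, 0 ≤ x → x ≤ y → y ≤ b →
      IntervalIntegrable (fun t => t * f t) volume x y :=
    fun hx hxy hy => (hsub hx hxy hy).continuousOn_mul continuousOn_id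
  have hlow : 0 ≤ ∫ x in 0..a, x * f x := intervalIntegral.integral_nonneg ha fun x hx =>
    mul_nonneg hx.1 (hf0 x ⟨hx.1, hx.2.trans hab⟩)
  calc a * ∫ x in a..b, f x = ∫ x in a..b, a * f x := (intervalIntegral.integral_const_mul a f).symm
    _ ≤ ∫ x in a..b, x * f x :=
        intervalIntegral.integral_mono_on hab ((hsub ha hab le_rfl).const_mul a)
          (hmul ha hab le_rfl) fun x hx =>
            mul_le_mul_of_nonneg_right hx.1 (hf0 x ⟨ha.trans hx.1, hx.2⟩)
    _ ≤ (∫ x in 0..a, x * f x) + ∫ x in a..b, x * f x := le_add_of_nonneg_left hlow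
    _ = ∫ x in 0..b, x * f x :=
        intervalIntegral.integral_add_adjacent_intervals (hmul le_rfl ha hab) (hmul ha hab le_rfl)

end MonotoneMass

lemma setIntegral_Ioo_eq_intervalIntegral (f : ℝ → ℝ) {x y : ℝ} (hxy : x ≤ y) :
    ∫ p in Ioo x y, f p = ∫ p in x..y, f p := by
  rw [intervalIntegral.integral_of_le hxy, integral_Ioc_eq_integral_Ioo]

/-- Let `f_n(p) = c_n (1-p)^n e^{-1/p}` on `(0,1)`, normalized to a probability density,
and let `a_n = 1/(4 √(max 1 n))`. Then `∫_{a_n}^1 f_n ≥ 1/2`, and consequently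
`∫_0^1 p f_n(p) dp ≥ 1/(8 √(max 1 n))`. -/
theorem exp_prior_mass_and_mean_bound (n : ℕ) :
    (let c : ℝ := (∫ p in Set.Ioo (0 : ℝ) 1, (1 - p) ^ n * Real.exp (-(1 / p)))⁻¹
     let a : ℝ := 1 / (4 * Real.sqrt (max 1 (n : ℝ)))
     c * (∫ p in Set.Ioo a 1, (1 - p) ^ n * Real.exp (-(1 / p))) ≥ 1 / 2 ∧
     c * (∫ p in Set.Ioo (0 : ℝ) 1, p * ((1 - p) ^ n * Real.exp (-(1 / p))))
        ≥ 1 / (8 * Real.sqrt (max 1 (n : ℝ)))) := by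
  intro c a
  set s := Real.sqrt (max 1 (n : ℝ))
  have hs1 : 1 ≤ s := Real.one_le_sqrt.2 (le_max_left _ _)
  have hns : (n : ℝ) ≤ s ^ 2 := by
    rw [Real.sq_sqrt (zero_le_one.trans (le_max_left _ _))]
    exact le_max_right _ _
  have ha_def : a = 1 / (4 * s) := rfl
  have ha0 : 0 < a := by positivity
  have has : a * s = 1 / 4 := by rw [ha_def]; field_simp
  have ha : a ≤ 1 / 4 := by nlinarith
  have hmono := expPriorWeight.monotoneOn_Ioo n (b := 2 * a) (by linarith) (by nlinarith)
  have hint := expPriorWeight.integrableOn_Icc n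
  have hZ : 0 < ∫ p in 0..1, expPriorWeight n p := intervalIntegral.intervalIntegral_pos_of_pos_on
    (hint.intervalIntegrable_of_Icc_subset zero_le_one subset_rfl)
    (fun p hp => expPriorWeight.pos n hp.2) one_pos
  have hhalf := intervalIntegral_le_two_mul_of_monotoneOn ha0.le (by linarith) hint
    (fun p hp => expPriorWeight.nonneg n hp.2) hmono
  have hmean := mul_intervalIntegral_le_intervalIntegral_mul ha0.le (by linarith) hint
    (fun p hp => expPriorWeight.nonneg n hp.2)
  change (∫ p in Ioo 0 1, expPriorWeight n p)⁻¹ * (∫ p in Ioo a 1, expPriorWeight n p) ≥ 1 / 2 ∧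
    (∫ p in Ioo 0 1, expPriorWeight n p)⁻¹ * (∫ p in Ioo 0 1, p * expPriorWeight n p) ≥ 1 / (8 * s)
  have h8 : 1 / (8 * s) = a / 2 := by rw [ha_def]; ring
  simp only [setIntegral_Ioo_eq_intervalIntegral _ zero_le_one,
    setIntegral_Ioo_eq_intervalIntegral _ (by linarith : a ≤ 1), h8, ge_iff_le, ← div_eq_inv_mul,
    le_div_iff₀ hZ]
  exact ⟨by linarith, by linarith [mul_le_mul_of_nonneg_left hhalf ha0.le]⟩
end

section
/- Suppose the prior density $\pi$ satisfies that for some $\gamma > 0$ and some $\delta = \epsilon/5 \in (0,1)$ the posterior mean bounds $(1-\delta)\,X_k^n/(n+\gamma) \leq \hat p_k(X^n) \leq (1+\delta)(X_k^n + \gamma)/n$ hold for all data. Then for $N = 8\epsilon^{-3} + 3\gamma \epsilon^{-1}$, the inequality $P_p(|\hat p_k(X^n) - p_k| \geq p_k \epsilon) \leq \epsilon$ holds whenever $np_k \geq N$, where $X_k^n$ is binomial with parameters $n$ and $p_k$. -/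
open MeasureTheory

section Aux

/-- termwise nonnegativity of binomial weights -/
private lemma w_nonneg {p : ℝ} (hp0 : 0 ≤ p) (hp1 : p ≤ 1) (n k : ℕ) :
    0 ≤ p ^ k * (1 - p) ^ (n - k) * (n.choose k : ℝ) :=
  mul_nonneg (mul_nonneg (pow_nonneg hp0 _) (pow_nonneg (by linarith) _)) (Nat.cast_nonneg _)

/-- Chernoff bound for the binomial distribution, real version. -/
private lemma chernoff (n : ℕ) (p θ a : ℝ) (hp0 : 0 ≤ p) (hp1 : p ≤ 1)
    (P : Fin (n + 1) → Prop) [DecidablePred P]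
    (hP : ∀ x, P x → θ * a ≤ θ * ((x : ℕ) : ℝ)) :
    ∑ x ∈ Finset.univ.filter P,
        p ^ (x : ℕ) * (1 - p) ^ (n - (x : ℕ)) * (n.choose (x : ℕ) : ℝ)
      ≤ Real.exp ((n : ℝ) * p * (Real.exp θ - 1) - θ * a) := by
  have hw : ∀ x : Fin (n + 1),
      0 ≤ p ^ (x : ℕ) * (1 - p) ^ (n - (x : ℕ)) * (n.choose (x : ℕ) : ℝ) :=
    fun x => w_nonneg hp0 hp1 n _
  calc
    ∑ x ∈ Finset.univ.filter P,
        p ^ (x : ℕ) * (1 - p) ^ (n - (x : ℕ)) * (n.choose (x : ℕ) : ℝ)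
      ≤ ∑ x ∈ Finset.univ.filter P,
          (p ^ (x : ℕ) * (1 - p) ^ (n - (x : ℕ)) * (n.choose (x : ℕ) : ℝ))
            * Real.exp (θ * ((x : ℕ) : ℝ) - θ * a) := by
        refine Finset.sum_le_sum fun x hx => ?_
        have hx' := (Finset.mem_filter.mp hx).2
        have h1 : (1 : ℝ) ≤ Real.exp (θ * ((x : ℕ) : ℝ) - θ * a) :=
          Real.one_le_exp (by linarith [hP x hx'])
        nlinarith [hw x]
    _ ≤ ∑ x : Fin (n + 1),
          (p ^ (x : ℕ) * (1 - p) ^ (n - (x : ℕ)) * (n.choose (x : ℕ) : ℝ))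
            * Real.exp (θ * ((x : ℕ) : ℝ) - θ * a) :=
        Finset.sum_le_sum_of_subset_of_nonneg (Finset.filter_subset _ _)
          (fun x _ _ => mul_nonneg (hw x) (Real.exp_nonneg _))
    _ = Real.exp (-(θ * a)) * ∑ x : Fin (n + 1),
          (p * Real.exp θ) ^ (x : ℕ) * (1 - p) ^ (n - (x : ℕ)) * (n.choose (x : ℕ) : ℝ) := by
        rw [Finset.mul_sum]
        refine Finset.sum_congr rfl fun x _ => ?_
        have he : Real.exp (θ * ((x : ℕ) : ℝ) - θ * a)
            = Real.exp θ ^ (x : ℕ) * Real.exp (-(θ * a)) := by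
          rw [show θ * ((x : ℕ) : ℝ) - θ * a = ((x : ℕ) : ℝ) * θ + -(θ * a) by ring,
            Real.exp_add, Real.exp_nat_mul]
        rw [he]; ring
    _ = Real.exp (-(θ * a)) * (p * Real.exp θ + (1 - p)) ^ n := by
        congr 1
        rw [Fin.sum_univ_eq_sum_range
          (fun k => (p * Real.exp θ) ^ k * (1 - p) ^ (n - k) * (n.choose k : ℝ))]
        exact (add_pow (p * Real.exp θ) (1 - p) n).symm
    _ ≤ Real.exp (-(θ * a)) * Real.exp ((n : ℝ) * (p * (Real.exp θ - 1))) := by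
        refine mul_le_mul_of_nonneg_left ?_ (Real.exp_nonneg _)
        rw [Real.exp_nat_mul]
        refine pow_le_pow_left₀ ?_ ?_ n
        · nlinarith [Real.exp_nonneg θ]
        · have := Real.add_one_le_exp (p * (Real.exp θ - 1))
          linarith
    _ = Real.exp ((n : ℝ) * p * (Real.exp θ - 1) - θ * a) := by
        rw [← Real.exp_add]; ring_nf

private lemma exp_neg_two_le {y : ℝ} (hy : 0 < y) : Real.exp (-(2 * y)) ≤ 1 / (4 * y) := by
  have h := Real.add_one_le_exp y
  have h3 : (y + 1) * (y + 1) ≤ Real.exp y * Real.exp y :=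
    mul_le_mul h h (by linarith) (by linarith [Real.exp_nonneg y])
  have h2 : 4 * y ≤ Real.exp (2 * y) := by
    have he : Real.exp (2 * y) = Real.exp y * Real.exp y := by
      rw [← Real.exp_add]; ring_nf
    nlinarith [sq_nonneg (y - 1)]
  rw [Real.exp_neg, one_div]
  exact inv_anti₀ (by positivity) h2

private lemma exp_le_one_add {s : ℝ} (hs0 : 0 ≤ s) (hs : s ≤ 1 / 3) :
    Real.exp s ≤ 1 + s + s ^ 2 := by
  have h1 : 1 - s / 2 ≤ Real.exp (-(s / 2)) := by
    have := Real.add_one_le_exp (-(s / 2)); linarith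
  have h2 : Real.exp (-(s / 2)) * Real.exp (s / 2) = 1 := by
    rw [← Real.exp_add]; ring_nf; exact Real.exp_zero
  have h3 : Real.exp s = Real.exp (s / 2) * Real.exp (s / 2) := by
    rw [← Real.exp_add]; ring_nf
  have h4 := Real.exp_pos (s / 2)
  have h5 : (1 - s / 2) * Real.exp (s / 2) ≤ 1 := by
    calc (1 - s / 2) * Real.exp (s / 2) ≤ Real.exp (-(s / 2)) * Real.exp (s / 2) :=
          mul_le_mul_of_nonneg_right h1 h4.le
      _ = 1 := h2
  have h6 : ((1 - s / 2) * Real.exp (s / 2)) * ((1 - s / 2) * Real.exp (s / 2)) ≤ 1 :=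
    mul_le_one₀ h5 (mul_nonneg (by linarith) h4.le) h5
  have hkey : 1 ≤ (1 + s + s ^ 2) * ((1 - s / 2) * (1 - s / 2)) := by
    nlinarith [mul_nonneg (mul_nonneg hs0 hs0) (by linarith : (0:ℝ) ≤ 1 - 3 * s),
      sq_nonneg s, mul_nonneg (mul_nonneg (mul_nonneg hs0 hs0) hs0) hs0]
  have hpos : 0 < (1 - s / 2) * (1 - s / 2) := by nlinarith
  nlinarith [h6, hkey, hpos, mul_pos h4 h4, h3]

private lemma exp_neg_le_one_sub {s : ℝ} (hs0 : 0 ≤ s) :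
    Real.exp (-s) ≤ 1 - s + s ^ 2 := by
  have h1 := Real.add_one_le_exp s
  have h2 : Real.exp (-s) * Real.exp s = 1 := by rw [← Real.exp_add]; ring_nf; exact Real.exp_zero
  have h3 : Real.exp (-s) * (s + 1) ≤ 1 := by
    calc Real.exp (-s) * (s + 1) ≤ Real.exp (-s) * Real.exp s :=
          mul_le_mul_of_nonneg_left h1 (Real.exp_pos (-s)).le
      _ = 1 := h2
  nlinarith [h3, (by linarith : (0:ℝ) < 1 + s),
    mul_nonneg (mul_nonneg hs0 hs0) hs0, Real.exp_pos (-s)]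

end Aux
private lemma binomial_toMeasure_finset {pk : ℝ} (hp0 : 0 ≤ pk) (hp1 : pk ≤ 1) (n : ℕ)
    (h : Real.toNNReal pk ≤ 1) (F : Finset (Fin (n + 1))) :
    (PMF.binomial (Real.toNNReal pk) h n).toMeasure ↑F
      = ENNReal.ofReal
          (∑ x ∈ F, pk ^ (x : ℕ) * (1 - pk) ^ (n - (x : ℕ)) * (n.choose (x : ℕ) : ℝ)) := by
  rw [PMF.toMeasure_apply_finset, ENNReal.ofReal_sum_of_nonneg (fun x _ => w_nonneg hp0 hp1 n _)]
  refine Finset.sum_congr rfl fun x _ => ?_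
  rw [PMF.binomial_apply, Fin.val_last,
    ENNReal.ofReal_mul (mul_nonneg (pow_nonneg hp0 _) (pow_nonneg (by linarith) _)),
    ENNReal.ofReal_mul (pow_nonneg hp0 _), ENNReal.ofReal_pow hp0,
    ENNReal.ofReal_pow (by linarith : (0:ℝ) ≤ 1 - pk), ENNReal.ofReal_natCast,
    show ENNReal.ofReal (1 - pk) = 1 - ENNReal.ofReal pk from by
      rw [ENNReal.ofReal_sub 1 hp0, ENNReal.ofReal_one]]
  rfl

set_option maxHeartbeats 1000000
/-- Explicit quantitative uniform consistency (Remark 3''): if an estimator `g` of `p_k`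
based on a binomial count `X_k^n` satisfies the deterministic bounds
`(1-ε/5) x/(n+γ) ≤ g x ≤ (1+ε/5)(x+γ)/n` for all data `x`, then for
`N = 8 ε⁻³ + 3 γ ε⁻¹`, whenever `n p_k ≥ N` we have
`P(|g(X_k^n) - p_k| ≥ p_k ε) ≤ ε`. -/
theorem uniform_consistency_explicit_constant
    (ε γ : ℝ) (hε : 0 < ε) (hε5 : ε / 5 < 1) (hγ : 0 < γ)
    (n : ℕ) (hn : 0 < n) (pk : ℝ) (hp0 : 0 ≤ pk) (hp1 : pk ≤ 1)
    (g : Fin (n + 1) → ℝ)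
    (hglow : ∀ x : Fin (n + 1), (1 - ε / 5) * (((x : ℕ) : ℝ) / (n + γ)) ≤ g x)
    (hgup : ∀ x : Fin (n + 1), g x ≤ (1 + ε / 5) * ((((x : ℕ) : ℝ) + γ) / n))
    (hN : 8 / ε ^ 3 + 3 * γ / ε ≤ n * pk) :
    (PMF.binomial (Real.toNNReal pk) (Real.toNNReal_le_one.mpr hp1) n).toMeasure
      {x : Fin (n + 1) | pk * ε ≤ |g x - pk|} ≤ ENNReal.ofReal ε := by
  classical
  by_cases hε1 : 1 ≤ ε
  · calc (PMF.binomial (Real.toNNReal pk) (Real.toNNReal_le_one.mpr hp1) n).toMeasure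
          {x : Fin (n + 1) | pk * ε ≤ |g x - pk|}
        ≤ (PMF.binomial (Real.toNNReal pk) (Real.toNNReal_le_one.mpr hp1) n).toMeasure
          Set.univ := measure_mono (Set.subset_univ _)
      _ = 1 := measure_univ
      _ ≤ ENNReal.ofReal ε := ENNReal.one_le_ofReal.mpr hε1
  push_neg at hε1
  have hnR : (0:ℝ) < n := Nat.cast_pos.mpr hn
  obtain ⟨m, hm_def⟩ : ∃ m : ℝ, m = (n : ℝ) * pk := ⟨_, rfl⟩
  have hm : 8 / ε ^ 3 + 3 * γ / ε ≤ m := by rw [hm_def]; exact_mod_cast hN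
  have hm0 : 0 < m := lt_of_lt_of_le (by positivity) hm
  have hδu : (0:ℝ) < 1 + ε / 5 := by linarith
  have hδl : (0:ℝ) < 1 - ε / 5 := by linarith
  obtain ⟨au, hau_def⟩ : ∃ au : ℝ, au = m * (1 + ε) / (1 + ε / 5) - γ := ⟨_, rfl⟩
  obtain ⟨al, hal_def⟩ : ∃ al : ℝ, al = pk * (1 - ε) * ((n : ℝ) + γ) / (1 - ε / 5) := ⟨_, rfl⟩
  set FU : Finset (Fin (n + 1)) := Finset.univ.filter (fun x => au ≤ ((x : ℕ) : ℝ)) with hFU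
  set FL : Finset (Fin (n + 1)) := Finset.univ.filter (fun x => ((x : ℕ) : ℝ) ≤ al) with hFL
  -- event containment
  have hsub : {x : Fin (n + 1) | pk * ε ≤ |g x - pk|} ⊆ (↑FU : Set (Fin (n + 1))) ∪ ↑FL := by
    intro x hx
    simp only [Set.mem_setOf_eq] at hx
    rcases le_abs.mp hx with h | h
    · left
      simp only [hFU, Finset.coe_filter, Finset.mem_univ, true_and, Set.mem_setOf_eq]
      have h2 : pk * (1 + ε) ≤ (1 + ε / 5) * ((((x : ℕ) : ℝ) + γ) / (n : ℝ)) := by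
        have := hgup x; linarith
      have hx1 : pk * (1 + ε) * (n : ℝ) ≤ (1 + ε / 5) * (((x : ℕ) : ℝ) + γ) := by
        calc pk * (1 + ε) * (n : ℝ)
            ≤ (1 + ε / 5) * ((((x : ℕ) : ℝ) + γ) / (n : ℝ)) * (n : ℝ) :=
              mul_le_mul_of_nonneg_right h2 hnR.le
          _ = (1 + ε / 5) * (((x : ℕ) : ℝ) + γ) := by field_simp
      have h3 : m * (1 + ε) / (1 + ε / 5) ≤ ((x : ℕ) : ℝ) + γ := by
        rw [div_le_iff₀ hδu, hm_def]
        linarith [hx1]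
      rw [hau_def]; linarith
    · right
      simp only [hFL, Finset.coe_filter, Finset.mem_univ, true_and, Set.mem_setOf_eq]
      have h2 : (1 - ε / 5) * (((x : ℕ) : ℝ) / ((n : ℝ) + γ)) ≤ pk * (1 - ε) := by
        have := hglow x; linarith
      have hng : (0:ℝ) < (n : ℝ) + γ := by linarith
      have hx2 : (1 - ε / 5) * ((x : ℕ) : ℝ) ≤ pk * (1 - ε) * ((n : ℝ) + γ) := by
        calc (1 - ε / 5) * ((x : ℕ) : ℝ)
            = (1 - ε / 5) * (((x : ℕ) : ℝ) / ((n : ℝ) + γ)) * ((n : ℝ) + γ) := by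
              field_simp
          _ ≤ pk * (1 - ε) * ((n : ℝ) + γ) := mul_le_mul_of_nonneg_right h2 hng.le
      rw [hal_def, le_div_iff₀ hδl]
      linarith
  -- quantitative facts
  have hm' : 8 + 3 * γ * ε ^ 2 ≤ m * ε ^ 3 := by
    have h1 := mul_le_mul_of_nonneg_right hm (by positivity : (0:ℝ) ≤ ε ^ 3)
    have heq : (8 / ε ^ 3 + 3 * γ / ε) * ε ^ 3 = 8 + 3 * γ * ε ^ 2 := by
      field_simp
    linarith [heq ▸ h1]
  -- upper tail exponent bound
  have hEU : m * (Real.exp (ε / 3) - 1) - (ε / 3) * au ≤ -(2 * (4 / (9 * ε))) := by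
    have hexp : Real.exp (ε / 3) ≤ 1 + ε / 3 + (ε / 3) ^ 2 :=
      exp_le_one_add (by positivity) (by linarith)
    have hA : m * (1 + 2 * ε / 3) ≤ m * (1 + ε) / (1 + ε / 5) := by
      rw [le_div_iff₀ hδu]
      nlinarith [mul_nonneg hm0.le (mul_nonneg hε.le (by linarith : (0:ℝ) ≤ 1 - ε))]
    have h1 : m * (Real.exp (ε / 3) - 1) ≤ m * (ε / 3 + (ε / 3) ^ 2) :=
      mul_le_mul_of_nonneg_left (by linarith) hm0.le
    have h2 : (ε / 3) * (m * (1 + 2 * ε / 3)) ≤ (ε / 3) * (m * (1 + ε) / (1 + ε / 5)) :=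
      mul_le_mul_of_nonneg_left hA (by positivity)
    have key : 2 * (4 / (9 * ε)) ≤ m * ε ^ 2 / 9 - ε * γ / 3 := by
      rw [show (2:ℝ) * (4 / (9 * ε)) = 8 / (9 * ε) from by ring,
        div_le_iff₀ (by positivity : (0:ℝ) < 9 * ε)]
      nlinarith [hm']
    rw [hau_def]
    nlinarith [h1, h2, key]
  -- lower tail exponent bound
  have hEL : m * (Real.exp (-(7 * ε / 15)) - 1) - (-(7 * ε / 15)) * al
      ≤ -(2 * (28 / (45 * ε))) := by
    have hexpn : Real.exp (-(7 * ε / 15)) ≤ 1 - 7 * ε / 15 + (7 * ε / 15) ^ 2 :=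
      exp_neg_le_one_sub (by positivity)
    have hal : al ≤ m * (1 - ε) / (1 - ε / 5) + γ := by
      have hB : m * (1 - ε) / (1 - ε / 5) * (1 - ε / 5) = m * (1 - ε) :=
        div_mul_cancel₀ _ hδl.ne' 
      rw [hal_def, div_le_iff₀ hδl, add_mul, hB, hm_def]
      have hpk1 : pk * (1 - ε) ≤ 1 - ε := by nlinarith
      nlinarith [mul_le_mul_of_nonneg_left (show pk * (1 - ε) ≤ 1 - ε / 5 by linarith) hγ.le]
    have hB2 : m * (1 - ε) / (1 - ε / 5) ≤ m * (1 - 4 * ε / 5) := by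
      rw [div_le_iff₀ hδl]
      nlinarith [mul_nonneg hm0.le (sq_nonneg ε)]
    have h1 : m * (Real.exp (-(7 * ε / 15)) - 1) ≤ m * (-(7 * ε / 15) + (7 * ε / 15) ^ 2) :=
      mul_le_mul_of_nonneg_left (by linarith) hm0.le
    have h3 : (7 * ε / 15) * al ≤ (7 * ε / 15) * (m * (1 - 4 * ε / 5) + γ) :=
      mul_le_mul_of_nonneg_left (by linarith) (by positivity)
    have key : 2 * (28 / (45 * ε)) ≤ 7 * m * ε ^ 2 / 45 - 7 * ε * γ / 15 := by
      rw [show (2:ℝ) * (28 / (45 * ε)) = 56 / (45 * ε) from by ring,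
        div_le_iff₀ (by positivity : (0:ℝ) < 45 * ε)]
      nlinarith [hm']
    nlinarith [h1, h3, key]
  -- Chernoff bounds
  have hSU : ∑ x ∈ FU, pk ^ (x : ℕ) * (1 - pk) ^ (n - (x : ℕ)) * (n.choose (x : ℕ) : ℝ)
      ≤ 9 * ε / 16 := by
    have hc := chernoff n pk (ε / 3) au hp0 hp1 (fun x => au ≤ ((x : ℕ) : ℝ))
      (fun x hx => mul_le_mul_of_nonneg_left hx (by positivity))
    rw [← hm_def] at hc
    have h3 := exp_neg_two_le (show (0:ℝ) < 4 / (9 * ε) by positivity)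
    have h4 : (1:ℝ) / (4 * (4 / (9 * ε))) = 9 * ε / 16 := by
      field_simp; ring
    calc ∑ x ∈ FU, pk ^ (x : ℕ) * (1 - pk) ^ (n - (x : ℕ)) * (n.choose (x : ℕ) : ℝ)
        ≤ Real.exp (m * (Real.exp (ε / 3) - 1) - (ε / 3) * au) := hc
      _ ≤ Real.exp (-(2 * (4 / (9 * ε)))) := Real.exp_le_exp.mpr hEU
      _ ≤ 1 / (4 * (4 / (9 * ε))) := h3
      _ = 9 * ε / 16 := h4
  have hSL : ∑ x ∈ FL, pk ^ (x : ℕ) * (1 - pk) ^ (n - (x : ℕ)) * (n.choose (x : ℕ) : ℝ)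
      ≤ 45 * ε / 112 := by
    have hP : ∀ x : Fin (n + 1), ((x : ℕ) : ℝ) ≤ al →
        (-(7 * ε / 15)) * al ≤ (-(7 * ε / 15)) * ((x : ℕ) : ℝ) := by
      intro x hx
      have h5 := mul_le_mul_of_nonneg_left hx (show (0:ℝ) ≤ 7 * ε / 15 from by positivity)
      linarith
    have hc := chernoff n pk (-(7 * ε / 15)) al hp0 hp1 (fun x => ((x : ℕ) : ℝ) ≤ al) hP
    rw [← hm_def] at hc
    have h3 := exp_neg_two_le (show (0:ℝ) < 28 / (45 * ε) by positivity)
    have h4 : (1:ℝ) / (4 * (28 / (45 * ε))) = 45 * ε / 112 := by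
      field_simp; ring
    calc ∑ x ∈ FL, pk ^ (x : ℕ) * (1 - pk) ^ (n - (x : ℕ)) * (n.choose (x : ℕ) : ℝ)
        ≤ Real.exp (m * (Real.exp (-(7 * ε / 15)) - 1) - (-(7 * ε / 15)) * al) := hc
      _ ≤ Real.exp (-(2 * (28 / (45 * ε)))) := Real.exp_le_exp.mpr hEL
      _ ≤ 1 / (4 * (28 / (45 * ε))) := h3
      _ = 45 * ε / 112 := h4
  have hSU0 : (0:ℝ) ≤ ∑ x ∈ FU, pk ^ (x : ℕ) * (1 - pk) ^ (n - (x : ℕ)) * (n.choose (x : ℕ) : ℝ) :=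
    Finset.sum_nonneg fun x _ => w_nonneg hp0 hp1 n _
  have hSL0 : (0:ℝ) ≤ ∑ x ∈ FL, pk ^ (x : ℕ) * (1 - pk) ^ (n - (x : ℕ)) * (n.choose (x : ℕ) : ℝ) :=
    Finset.sum_nonneg fun x _ => w_nonneg hp0 hp1 n _
  -- assemble
  calc (PMF.binomial (Real.toNNReal pk) (Real.toNNReal_le_one.mpr hp1) n).toMeasure
        {x : Fin (n + 1) | pk * ε ≤ |g x - pk|}
      ≤ (PMF.binomial (Real.toNNReal pk) (Real.toNNReal_le_one.mpr hp1) n).toMeasure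
        ((↑FU : Set (Fin (n + 1))) ∪ ↑FL) := measure_mono hsub
    _ ≤ (PMF.binomial (Real.toNNReal pk) (Real.toNNReal_le_one.mpr hp1) n).toMeasure
          (↑FU : Set (Fin (n + 1)))
        + (PMF.binomial (Real.toNNReal pk) (Real.toNNReal_le_one.mpr hp1) n).toMeasure
          (↑FL : Set (Fin (n + 1))) := measure_union_le _ _
    _ = ENNReal.ofReal
          (∑ x ∈ FU, pk ^ (x : ℕ) * (1 - pk) ^ (n - (x : ℕ)) * (n.choose (x : ℕ) : ℝ))
        + ENNReal.ofReal
          (∑ x ∈ FL, pk ^ (x : ℕ) * (1 - pk) ^ (n - (x : ℕ)) * (n.choose (x : ℕ) : ℝ)) := by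
        rw [binomial_toMeasure_finset hp0 hp1 n _ FU, binomial_toMeasure_finset hp0 hp1 n _ FL]
    _ ≤ ENNReal.ofReal ε := by
        rw [← ENNReal.ofReal_add hSU0 hSL0]
        exact ENNReal.ofReal_le_ofReal (by linarith)
end
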